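/- Let X ⊆ ℝⁿ be a nonempty compact convex set and f : ℝⁿ → ℝ twice continuously differentiable with μ·I ⪯ ∇²f(x) ⪯ L·I for all x ∈ X (0 < μ ≤ L), with unique minimizer x* over X. Fix x_k ∈ X, a symmetric positive definite H_k, and set η_k := max{λ_max(H_k⁻¹∇²f(x_k)), λ_max((∇²f(x_k))⁻¹H_k)}. Let x̃*_{k+1} := argmin_{x∈X} ( f(x_k) + ⟨∇f(x_k), x − x_k⟩ + ½‖x − x_k‖²_{H_k} ), set γ_k := μ/(L·η_k), and let x_{k+1} ∈ X be any point with f(x_{k+1}) ≤ f(x_k + γ_k (x̃*_{k+1} − x_k)) (e.g. the output of an exact line search, or the point x_k + γ_k(x̃*_{k+1} − x_k) itself). Then f(x_{k+1}) − f(x*) ≤ (1 − μ³/(L³η_k³)) · (f(x_k) − f(x*)). -/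

import Mathlib

open Matrix
open scoped RealInnerProductSpace

/-- The largest (real) eigenvalue of a matrix, as the supremum of its real spectrum. -/
noncomputable def lamMax {n : ℕ} (M : Matrix (Fin n) (Fin n) ℝ) : ℝ :=
  sSup (spectrum ℝ M)

/-- The smallest (real) eigenvalue of a matrix, as the infimum of its real spectrum. -/
noncomputable def lamMin {n : ℕ} (M : Matrix (Fin n) (Fin n) ℝ) : ℝ :=
  sInf (spectrum ℝ M)

/-- Action of a matrix on a vector of Euclidean space. -/
noncomputable def mApply {n : ℕ} (H : Matrix (Fin n) (Fin n) ℝ)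
    (v : EuclideanSpace ℝ (Fin n)) : EuclideanSpace ℝ (Fin n) :=
  Matrix.toEuclideanCLM (𝕜 := ℝ) H v

/-- The squared matrix "norm" ‖v‖²_H := vᵀ H v. -/
noncomputable def qForm {n : ℕ} (H : Matrix (Fin n) (Fin n) ℝ)
    (v : EuclideanSpace ℝ (Fin n)) : ℝ :=
  ⟪v, mApply H v⟫

/-- Spectral (ℓ² operator) norm of a matrix. -/
noncomputable def mNorm {n : ℕ} (H : Matrix (Fin n) (Fin n) ℝ) : ℝ :=
  ‖Matrix.toEuclideanCLM (𝕜 := ℝ) H‖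

/-!
Write `d = x̃ − x_k`, `G = ∇²f(x_k)` and `γ = μ/(Lη)`. Since `μ‖v‖² ≤ vᵀGv ≤ η‖v‖²_{H_k}`, the
`L`-smoothness bound at `x_k + γd` is dominated by the model: `f(x_k + γd) ≤ f(x_k) + γ(f̂(x̃) − f(x_k))`.
Comparing the model minimizer `x̃` with the feasible point `x_k + γ(x* − x_k)` and using
`‖v‖²_{H_k} ≤ ηL‖v‖²` together with `μ`-strong convexity gives `f̂(x̃) − f(x_k) ≤ γ(f(x*) − f(x_k))`.
Hence `f` drops by at least `γ²(f(x_k) − f(x*))`, which beats `γ³(f(x_k) − f(x*))` because `η ≥ 1`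
forces `γ ≤ 1`.
-/

open scoped MatrixOrder

section QuadraticForm

variable {n : ℕ}

lemma qForm_eq_dotProduct (M : Matrix (Fin n) (Fin n) ℝ) (v : EuclideanSpace ℝ (Fin n)) :
    qForm M v = star (v : Fin n → ℝ) ⬝ᵥ (M *ᵥ v) := by
  rw [qForm, mApply, EuclideanSpace.inner_eq_star_dotProduct, Matrix.ofLp_toEuclideanCLM,
    dotProduct_comm]

lemma qForm_sub (A B : Matrix (Fin n) (Fin n) ℝ) (v : EuclideanSpace ℝ (Fin n)) :
    qForm (A - B) v = qForm A v - qForm B v := by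
  simp only [qForm, mApply, map_sub, _root_.sub_apply, inner_sub_right]

lemma qForm_smul (c : ℝ) (A : Matrix (Fin n) (Fin n) ℝ) (v : EuclideanSpace ℝ (Fin n)) :
    qForm (c • A) v = c * qForm A v := by
  simp only [qForm, mApply, map_smul, _root_.smul_apply, real_inner_smul_right]

lemma qForm_one (v : EuclideanSpace ℝ (Fin n)) : qForm 1 v = ‖v‖ ^ 2 := by
  simp [qForm, mApply]

lemma qForm_smul_vec (A : Matrix (Fin n) (Fin n) ℝ) (c : ℝ) (v : EuclideanSpace ℝ (Fin n)) :
    qForm A (c • v) = c ^ 2 * qForm A v := by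
  simp only [qForm, mApply, map_smul, real_inner_smul_left, real_inner_smul_right]
  ring

lemma Matrix.PosSemidef.qForm_nonneg {A : Matrix (Fin n) (Fin n) ℝ} (hA : A.PosSemidef)
    (v : EuclideanSpace ℝ (Fin n)) : 0 ≤ qForm A v := by
  rw [qForm_eq_dotProduct]
  exact hA.dotProduct_mulVec_nonneg _

lemma Matrix.PosDef.qForm_pos {A : Matrix (Fin n) (Fin n) ℝ} (hA : A.PosDef)
    {v : EuclideanSpace ℝ (Fin n)} (hv : v ≠ 0) : 0 < qForm A v := by
  rw [qForm_eq_dotProduct]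
  exact hA.dotProduct_mulVec_pos (by simpa using hv)

lemma qForm_mono {A B : Matrix (Fin n) (Fin n) ℝ} (hAB : A ≤ B) (v : EuclideanSpace ℝ (Fin n)) :
    qForm A v ≤ qForm B v := by
  have := Matrix.PosSemidef.qForm_nonneg hAB v
  rw [qForm_sub] at this
  linarith

end QuadraticForm

section GeneralizedEigenvalue

variable {n : ℕ}

lemma Matrix.IsHermitian.le_lamMax_smul_one {A : Matrix (Fin n) (Fin n) ℝ}
    (hA : A.IsHermitian) : A ≤ lamMax A • 1 := by
  rw [← Algebra.algebraMap_eq_smul_one]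
  exact le_algebraMap_of_spectrum_le
    (fun x hx => le_csSup (Matrix.finite_spectrum A).bddAbove hx) hA.isSelfAdjoint

/- With `R = P^{1/2}`, the matrix `P⁻¹Q` is similar to the Hermitian `A = R⁻¹QR⁻¹`; the bound
`A ≤ λ_max(A) • 1` transfers back to `Q = RAR` by congruence with `R`. -/
lemma le_lamMax_inv_mul_smul {P Q : Matrix (Fin n) (Fin n) ℝ} (hP : P.PosDef)
    (hQ : Q.IsHermitian) : Q ≤ lamMax (P⁻¹ * Q) • P := by
  set R := CFC.sqrt P
  have hRR : R * R = P := CFC.sqrt_mul_sqrt_self P hP.posSemidef.nonneg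
  have hR : IsSelfAdjoint R := (CFC.sqrt_nonneg P).isSelfAdjoint
  have hRu : IsUnit R :=
    (Matrix.isStrictlyPositive_iff_posDef.mpr hP).isUnit_cfcSqrt
  have hRu' : IsUnit R.det := (Matrix.isUnit_iff_isUnit_det R).mp hRu
  set A := R⁻¹ * Q * R⁻¹
  have hA : A.IsHermitian := by
    simp only [A, Matrix.IsHermitian, Matrix.conjTranspose_mul, Matrix.conjTranspose_nonsing_inv,
      show Rᴴ = R from hR, hQ.eq, mul_assoc]
  have hspec : lamMax A = lamMax (P⁻¹ * Q) := by
    have hc := spectrum.units_conjugate (R := ℝ) (a := P⁻¹ * Q) (u := hRu.unit)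
    rw [lamMax, lamMax, ← hc, hRu.unit_spec, Matrix.coe_units_inv, hRu.unit_spec, ← hRR,
      Matrix.mul_inv_rev, ← mul_assoc, ← mul_assoc, Matrix.mul_nonsing_inv _ hRu', one_mul]
  have hRA : R * A * R = Q := by
    simp only [A, mul_assoc, Matrix.nonsing_inv_mul _ hRu', mul_one]
    rw [← mul_assoc, Matrix.mul_nonsing_inv _ hRu', one_mul]
  have hconj := hR.conjugate_le_conjugate hA.le_lamMax_smul_one
  rwa [hRA, mul_smul_comm, smul_mul_assoc, mul_one, hRR, hspec] at hconj

lemma qForm_le_mul_qForm_of_lamMax_le {P Q : Matrix (Fin n) (Fin n) ℝ} (hP : P.PosDef)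
    (hQ : Q.IsHermitian) {η : ℝ} (hη : lamMax (P⁻¹ * Q) ≤ η) (v : EuclideanSpace ℝ (Fin n)) :
    qForm Q v ≤ η * qForm P v :=
  calc qForm Q v ≤ lamMax (P⁻¹ * Q) * qForm P v := by
        simpa only [qForm_smul] using qForm_mono (le_lamMax_inv_mul_smul hP hQ) v
    _ ≤ η * qForm P v := mul_le_mul_of_nonneg_right hη (hP.posSemidef.qForm_nonneg v)

lemma one_le_max_lamMax_inv_mul [Nontrivial (EuclideanSpace ℝ (Fin n))]
    {P Q : Matrix (Fin n) (Fin n) ℝ} (hP : P.PosDef) (hQ : Q.PosDef) :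
    1 ≤ max (lamMax (P⁻¹ * Q)) (lamMax (Q⁻¹ * P)) := by
  obtain ⟨v, hv⟩ := exists_ne (0 : EuclideanSpace ℝ (Fin n))
  have hPQ := qForm_le_mul_qForm_of_lamMax_le hP hQ.isHermitian
    (le_max_left _ (lamMax (Q⁻¹ * P))) v
  have hQP := qForm_le_mul_qForm_of_lamMax_le hQ hP.isHermitian
    (le_max_right (lamMax (P⁻¹ * Q)) _) v
  have hPv := hP.qForm_pos hv
  have hQv := hQ.qForm_pos hv
  nlinarith

end GeneralizedEigenvalue

lemma taylor_one_le_of_second_deriv_le {φ φ' φ'' : ℝ → ℝ} {c : ℝ}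
    (hφ : ∀ t, HasDerivAt φ (φ' t) t) (hφ' : ∀ t, HasDerivAt φ' (φ'' t) t)
    (hc : ∀ t ∈ Set.Icc (0 : ℝ) 1, φ'' t ≤ c) :
    φ 1 ≤ φ 0 + φ' 0 + c / 2 := by
  have hmono : ∀ {g g' : ℝ → ℝ}, (∀ t, HasDerivAt g (g' t) t) →
      (∀ t ∈ Set.Icc (0 : ℝ) 1, 0 ≤ g' t) → MonotoneOn g (Set.Icc 0 1) := fun hg hg' =>
    monotoneOn_of_hasDerivWithinAt_nonneg (convex_Icc 0 1)
      (fun t _ => (hg t).continuousAt.continuousWithinAt)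
      (fun t _ => (hg t).hasDerivWithinAt) (fun t ht => hg' t (interior_subset ht))
  have hslope : ∀ t ∈ Set.Icc (0 : ℝ) 1, φ' t ≤ φ' 0 + c * t := by
    intro t ht
    have := hmono (g := fun s => c * s - φ' s)
      (fun t => ((hasDerivAt_id t).const_mul c).sub (hφ' t)) (fun t ht => by simpa using hc t ht)
      (Set.left_mem_Icc.mpr zero_le_one) ht ht.1
    simp only at this
    linarith
  have := hmono (g := fun s => φ' 0 * s + c * s ^ 2 / 2 - φ s)
    (fun t => (((hasDerivAt_id t).const_mul (φ' 0)).add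
      (((hasDerivAt_pow 2 t).const_mul c).div_const 2)).sub (hφ t))
    (fun t ht => by
      simp only [mul_one, Nat.cast_ofNat, Nat.add_one_sub_one, pow_one, sub_nonneg]
      linarith [hslope t ht])
    (Set.left_mem_Icc.mpr zero_le_one) (Set.right_mem_Icc.mpr zero_le_one) zero_le_one
  simp only at this
  linarith

section Taylor

variable {E : Type*} [NormedAddCommGroup E] [InnerProductSpace ℝ E] [CompleteSpace E]
  {f : E → ℝ} {H : E → E →L[ℝ] E} {X : Set E}

lemma hasDerivAt_apply_add_smul (hf : Differentiable ℝ f) (x d : E) (t : ℝ) :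
    HasDerivAt (fun s : ℝ => f (x + s • d)) ⟪gradient f (x + t • d), d⟫ t := by
  have hline : HasDerivAt (fun s : ℝ => x + s • d) d t := by
    simpa using ((hasDerivAt_id t).smul_const d).const_add x
  simpa [Function.comp_def] using
    (hf (x + t • d)).hasGradientAt.hasFDerivAt.comp_hasDerivAt t hline

lemma hasDerivAt_inner_gradient_add_smul (hH : ∀ x, HasFDerivAt (gradient f) (H x) x)
    (x d : E) (t : ℝ) :
    HasDerivAt (fun s : ℝ => ⟪gradient f (x + s • d), d⟫) ⟪d, H (x + t • d) d⟫ t := by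
  have hline : HasDerivAt (fun s : ℝ => x + s • d) d t := by
    simpa using ((hasDerivAt_id t).smul_const d).const_add x
  simpa [real_inner_comm] using
    ((hH (x + t • d)).comp_hasDerivAt t hline).inner ℝ (hasDerivAt_const t d)

lemma Convex.apply_le_of_hessian_le (hX : Convex ℝ X) (hf : Differentiable ℝ f)
    (hH : ∀ x, HasFDerivAt (gradient f) (H x) x) {L : ℝ}
    (hL : ∀ z ∈ X, ∀ v, ⟪v, H z v⟫ ≤ L * ‖v‖ ^ 2) {x y : E} (hx : x ∈ X) (hy : y ∈ X) :
    f y ≤ f x + ⟪gradient f x, y - x⟫ + L / 2 * ‖y - x‖ ^ 2 := by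
  have := taylor_one_le_of_second_deriv_le (hasDerivAt_apply_add_smul hf x (y - x))
    (hasDerivAt_inner_gradient_add_smul hH x (y - x))
    (fun t ht => hL _ (hX.add_smul_sub_mem hx hy ht) _)
  simp only [zero_smul, add_zero, one_smul, add_sub_cancel] at this
  linarith

lemma Convex.le_apply_of_le_hessian (hX : Convex ℝ X) (hf : Differentiable ℝ f)
    (hH : ∀ x, HasFDerivAt (gradient f) (H x) x) {μ : ℝ}
    (hμ : ∀ z ∈ X, ∀ v, μ * ‖v‖ ^ 2 ≤ ⟪v, H z v⟫) {x y : E} (hx : x ∈ X) (hy : y ∈ X) :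
    f x + ⟪gradient f x, y - x⟫ + μ / 2 * ‖y - x‖ ^ 2 ≤ f y := by
  have := taylor_one_le_of_second_deriv_le
    (fun t => (hasDerivAt_apply_add_smul hf x (y - x) t).neg)
    (fun t => (hasDerivAt_inner_gradient_add_smul hH x (y - x) t).neg)
    (fun t ht => neg_le_neg (hμ _ (hX.add_smul_sub_mem hx hy ht) (y - x)))
  simp only [Pi.neg_apply, zero_smul, add_zero, one_smul, add_sub_cancel] at this
  linarith

end Taylor

lemma apply_add_smul_sub_le_of_model_min {E : Type*} [NormedAddCommGroup E]
    [InnerProductSpace ℝ E] {X : Set E} (hX : Convex ℝ X) {f m q : E → ℝ} {g x x' xstar : E}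
    {μ L η γ : ℝ}
    (hsmooth : ∀ y ∈ X, f y ≤ f x + ⟪g, y - x⟫ + L / 2 * ‖y - x‖ ^ 2)
    (hstrong : ∀ y ∈ X, f x + ⟪g, y - x⟫ + μ / 2 * ‖y - x‖ ^ 2 ≤ f y)
    (hq_smul : ∀ (c : ℝ) v, q (c • v) = c ^ 2 * q v)
    (hq_lower : ∀ v, μ * ‖v‖ ^ 2 ≤ η * q v) (hq_upper : ∀ v, q v ≤ η * L * ‖v‖ ^ 2)
    (hm : ∀ w, m w = f x + ⟪g, w - x⟫ + 1 / 2 * q (w - x))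
    (hx : x ∈ X) (hx' : x' ∈ X) (hmin : ∀ w ∈ X, m x' ≤ m w) (hxstar : xstar ∈ X)
    (hη : 0 < η) (hγ0 : 0 ≤ γ) (hγ1 : γ ≤ 1) (hγ : γ * (L * η) = μ) :
    f (x + γ • (x' - x)) ≤ f x - γ ^ 2 * (f x - f xstar) := by
  have hsmooth_step := hsmooth _ (hX.add_smul_sub_mem hx hx' ⟨hγ0, hγ1⟩)
  rw [add_sub_cancel_left, real_inner_smul_right, norm_smul, mul_pow, Real.norm_eq_abs,
    sq_abs] at hsmooth_step
  have hcurv : L * (γ ^ 2 * ‖x' - x‖ ^ 2) ≤ γ * q (x' - x) := by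
    refine le_of_mul_le_mul_left ?_ hη
    calc η * (L * (γ ^ 2 * ‖x' - x‖ ^ 2)) = γ * (μ * ‖x' - x‖ ^ 2) := by rw [← hγ]; ring
      _ ≤ γ * (η * q (x' - x)) := mul_le_mul_of_nonneg_left (hq_lower _) hγ0
      _ = η * (γ * q (x' - x)) := by ring
  have hmodel := hmin _ (hX.add_smul_sub_mem hx hxstar ⟨hγ0, hγ1⟩)
  rw [hm, hm, add_sub_cancel_left, hq_smul, real_inner_smul_right] at hmodel
  have hq_star : γ ^ 2 * q (xstar - x) ≤ γ * (μ * ‖xstar - x‖ ^ 2) :=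
    calc γ ^ 2 * q (xstar - x) ≤ γ ^ 2 * (η * L * ‖xstar - x‖ ^ 2) :=
          mul_le_mul_of_nonneg_left (hq_upper _) (sq_nonneg γ)
      _ = γ * (μ * ‖xstar - x‖ ^ 2) := by rw [← hγ]; ring
  have hstrong_star := mul_le_mul_of_nonneg_left (hstrong _ hxstar) hγ0
  have hmodel_star : ⟪g, x' - x⟫ + 1 / 2 * q (x' - x) ≤ γ * (f xstar - f x) := by linarith
  linarith [mul_le_mul_of_nonneg_left hmodel_star hγ0]

theorem socgs_pvm_global_line_search_general {n : ℕ}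
    (X : Set (EuclideanSpace ℝ (Fin n)))
    (hconv : Convex ℝ X)
    (f : EuclideanSpace ℝ (Fin n) → ℝ) (hf : ContDiff ℝ 2 f)
    (Hess : EuclideanSpace ℝ (Fin n) → Matrix (Fin n) (Fin n) ℝ)
    (hHess : ∀ x, HasFDerivAt (gradient f) (Matrix.toEuclideanCLM (𝕜 := ℝ) (Hess x)) x)
    (μ L : ℝ) (hμ : 0 < μ) (hμL : μ ≤ L)
    (hbound : ∀ x ∈ X, (Hess x - μ • (1 : Matrix (Fin n) (Fin n) ℝ)).PosSemidef ∧
      (L • (1 : Matrix (Fin n) (Fin n) ℝ) - Hess x).PosSemidef)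
    (xstar : EuclideanSpace ℝ (Fin n)) (hxstar : xstar ∈ X)
    (hminstar : ∀ y ∈ X, f xstar ≤ f y)
    (xk : EuclideanSpace ℝ (Fin n)) (hxk : xk ∈ X)
    (Hk : Matrix (Fin n) (Fin n) ℝ) (hHk : Hk.PosDef)
    (ηk : ℝ) (hηk : ηk = max (lamMax (Hk⁻¹ * Hess xk)) (lamMax ((Hess xk)⁻¹ * Hk)))
    (fhat : EuclideanSpace ℝ (Fin n) → ℝ)
    (hfhat : ∀ x, fhat x =
      f xk + ⟪gradient f xk, x - xk⟫ + (1 / 2) * qForm Hk (x - xk))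
    (xt : EuclideanSpace ℝ (Fin n)) (hxtX : xt ∈ X)
    (hxtmin : ∀ w ∈ X, fhat xt ≤ fhat w)
    (γ : ℝ) (hγ : γ = μ / (L * ηk))
    (xk1 : EuclideanSpace ℝ (Fin n))
    (hxk1 : f xk1 ≤ f (xk + γ • (xt - xk))) :
    f xk1 - f xstar ≤ (1 - μ ^ 3 / (L ^ 3 * ηk ^ 3)) * (f xk - f xstar) := by
  -- For `n = 0` the spectra are empty and `ηk` is the junk value `sSup ∅ = 0`.
  rcases subsingleton_or_nontrivial (EuclideanSpace ℝ (Fin n)) with _ | _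
  · simp [Subsingleton.elim xk1 xstar, Subsingleton.elim xk xstar]
  have hfd : Differentiable ℝ f := hf.differentiable (by norm_num)
  have hlo : ∀ z ∈ X, ∀ v, μ * ‖v‖ ^ 2 ≤ qForm (Hess z) v := fun z hz v => by
    simpa only [qForm_smul, qForm_one] using qForm_mono (hbound z hz).1 v
  have hup : ∀ z ∈ X, ∀ v, qForm (Hess z) v ≤ L * ‖v‖ ^ 2 := fun z hz v => by
    simpa only [qForm_smul, qForm_one] using qForm_mono (hbound z hz).2 v
  have hG : (Hess xk).PosDef := by
    simpa using (Matrix.PosDef.one.smul hμ).add_posSemidef (hbound xk hxk).1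
  have hGH := qForm_le_mul_qForm_of_lamMax_le hHk hG.isHermitian (hηk ▸ le_max_left _ _)
  have hHG := qForm_le_mul_qForm_of_lamMax_le hG hHk.isHermitian (hηk ▸ le_max_right _ _)
  have hη : 1 ≤ ηk := hηk ▸ one_le_max_lamMax_inv_mul hHk hG
  have hL : 0 < L := hμ.trans_le hμL
  have hγ0 : 0 ≤ γ := by rw [hγ]; positivity
  have hγ1 : γ ≤ 1 := by rw [hγ, div_le_one (by positivity)]; nlinarith
  have hstep := apply_add_smul_sub_le_of_model_min hconv
    (fun y hy => hconv.apply_le_of_hessian_le hfd hHess hup hxk hy)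
    (fun y hy => hconv.le_apply_of_le_hessian hfd hHess hlo hxk hy)
    (qForm_smul_vec Hk) (fun v => (hlo xk hxk v).trans (hGH v))
    (fun v => by nlinarith [hHG v, hup xk hxk v]) hfhat hxk hxtX hxtmin hxstar
    (by positivity) hγ0 hγ1 (by rw [hγ]; field_simp)
  have hγ3 : μ ^ 3 / (L ^ 3 * ηk ^ 3) = γ ^ 3 := by rw [hγ]; ring
  have hgap := sub_nonneg.2 (hminstar xk hxk)
  rw [hγ3]
  nlinarith [pow_le_pow_of_le_one hγ0 hγ1 (by norm_num : 2 ≤ 3)]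

/-- global convergence of the PVM step with exact line search or
`γ_k = μ/(Lη_k)`: with the setup of the PVM step and any `x_{k+1} ∈ X` with
`f(x_{k+1}) ≤ f(x_k + γ_k(x̃*_{k+1} − x_k))` where `γ_k = μ/(Lη_k)`, one has
`f(x_{k+1}) − f(x*) ≤ (1 − μ³/(L³η_k³))(f(x_k) − f(x*))`. -/
theorem socgs_pvm_global_line_search {n : ℕ}
    (X : Set (EuclideanSpace ℝ (Fin n)))
    (hne : X.Nonempty) (hcomp : IsCompact X) (hconv : Convex ℝ X)
    (f : EuclideanSpace ℝ (Fin n) → ℝ) (hf : ContDiff ℝ 2 f)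
    (Hess : EuclideanSpace ℝ (Fin n) → Matrix (Fin n) (Fin n) ℝ)
    (hHess : ∀ x, HasFDerivAt (gradient f) (Matrix.toEuclideanCLM (𝕜 := ℝ) (Hess x)) x)
    (μ L : ℝ) (hμ : 0 < μ) (hμL : μ ≤ L)
    (hbound : ∀ x ∈ X, (Hess x - μ • (1 : Matrix (Fin n) (Fin n) ℝ)).PosSemidef ∧
      (L • (1 : Matrix (Fin n) (Fin n) ℝ) - Hess x).PosSemidef)
    (xstar : EuclideanSpace ℝ (Fin n)) (hxstar : xstar ∈ X)
    (hminstar : ∀ y ∈ X, f xstar ≤ f y)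
    (huniq : ∀ z ∈ X, (∀ y ∈ X, f z ≤ f y) → z = xstar)
    (xk : EuclideanSpace ℝ (Fin n)) (hxk : xk ∈ X)
    (Hk : Matrix (Fin n) (Fin n) ℝ) (hHk : Hk.PosDef)
    (ηk : ℝ) (hηk : ηk = max (lamMax (Hk⁻¹ * Hess xk)) (lamMax ((Hess xk)⁻¹ * Hk)))
    (fhat : EuclideanSpace ℝ (Fin n) → ℝ)
    (hfhat : ∀ x, fhat x =
      f xk + ⟪gradient f xk, x - xk⟫ + (1 / 2) * qForm Hk (x - xk))
    (xt : EuclideanSpace ℝ (Fin n)) (hxtX : xt ∈ X)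
    (hxtmin : ∀ w ∈ X, fhat xt ≤ fhat w)
    (γ : ℝ) (hγ : γ = μ / (L * ηk))
    (xk1 : EuclideanSpace ℝ (Fin n)) (hxk1X : xk1 ∈ X)
    (hxk1 : f xk1 ≤ f (xk + γ • (xt - xk))) :
    f xk1 - f xstar ≤ (1 - μ ^ 3 / (L ^ 3 * ηk ^ 3)) * (f xk - f xstar) :=
  socgs_pvm_global_line_search_general X hconv f hf Hess hHess μ L hμ hμL hbound xstar hxstar
    hminstar xk hxk Hk hHk ηk hηk fhat hfhat xt hxtX hxtmin γ hγ xk1 hxk1
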